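/- Let h₀ generate a linear T-periodic flow Φ^t on a Hilbert phase space, with Φ^t an isometry for every t. Let G be analytic on B(R) with analytic vector field. Define Z(ζ) = (1/T)∫₀^T G(Φ^t(ζ)) dt and χ(ζ) = (1/T)∫₀^T t·[Z(Φ^t(ζ)) − G(Φ^t(ζ))] dt. Then χ solves the homological equation {χ, h₀} + G = Z, Z is in normal form (i.e. {h₀, Z} = 0), and the vector fields satisfy sup_{B(R)} ‖X_Z‖ ≤ sup_{B(R)} ‖X_G‖ and sup_{B(R)} ‖X_χ‖ ≤ 2T · sup_{B(R)} ‖X_G‖. -/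

import Mathlib

open MeasureTheory

/-- The time-average `Z(ζ) = (1/T) ∫₀^T G(Φ^t ζ) dt`. -/
noncomputable def avgZ {E : Type*} [NormedAddCommGroup E] [InnerProductSpace ℝ E]
    (T : ℝ) (Φ : ℝ → E ≃ₗᵢ[ℝ] E) (G : E → ℝ) : E → ℝ :=
  fun ζ => (1 / T) * ∫ t in (0 : ℝ)..T, G (Φ t ζ)

/-- The solution of the homological equation,
`χ(ζ) = (1/T) ∫₀^T t·[Z(Φ^t ζ) − G(Φ^t ζ)] dt`. -/
noncomputable def homChi {E : Type*} [NormedAddCommGroup E] [InnerProductSpace ℝ E]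
    (T : ℝ) (Φ : ℝ → E ≃ₗᵢ[ℝ] E) (G : E → ℝ) : E → ℝ :=
  fun ζ => (1 / T) * ∫ t in (0 : ℝ)..T, t * (avgZ T Φ G (Φ t ζ) - G (Φ t ζ))


/-!
Periodicity makes the average `Z` invariant under the flow, so along an orbit
`χ(Φ^s ζ) = (1/T) (T²/2 · Z(ζ) - ∫₀^T t G(Φ^(t+s) ζ) dt)`; after the substitution
`u = t + s`, the fundamental theorem of calculus and periodicity give the derivative
`Z(ζ) - G(Φ^s ζ)`. On the ball, `Z` and `χ` are orbit integrals `∫₀^T w(t) G(Φ^t x) dt`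
with weights `w = 1/T` and `w = 1/2 - t/T`. Differentiating under the integral sign,
their gradients are `∫₀^T w(t) Φ^(-t) ∇G(Φ^t x) dt`; as `Φ^(-t)` and `J` are isometries,
these are bounded by `T · sup |w| · sup ‖∇G‖`.
-/

open Function

theorem hasDerivAt_integral_mul_comp_add {g : ℝ → ℝ} {T : ℝ} (hg : Continuous g)
    (hp : Periodic g T) (s : ℝ) :
    HasDerivAt (fun s => ∫ t in (0 : ℝ)..T, t * g (t + s))
      (T * g s - ∫ t in (0 : ℝ)..T, g t) s := by
  set K : ℝ → ℝ := fun x => ∫ u in (0 : ℝ)..x, u * g u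
  have hint : ∀ a b : ℝ, IntervalIntegrable (fun u => u * g u) volume a b :=
    fun a b => (continuous_id.mul hg).intervalIntegrable a b
  have hshift : ∀ s, ∫ t in (0 : ℝ)..T, t * g (t + s)
      = K (s + T) - K s - s * ∫ t in (0 : ℝ)..T, g t := by
    intro s
    have hsubst := intervalIntegral.integral_comp_add_right (fun u => (u - s) * g u) s
      (a := 0) (b := T)
    simp only [add_sub_cancel_right, zero_add] at hsubst
    rw [hsubst, add_comm T s, ← zero_add T, ← hp.intervalIntegral_add_eq s 0, zero_add]
    simp only [sub_mul]
    rw [intervalIntegral.integral_sub (hint _ _) ((hg.intervalIntegrable _ _).const_mul s),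
      intervalIntegral.integral_const_mul,
      intervalIntegral.integral_interval_sub_left (hint _ _) (hint _ _)]
  have hK : ∀ x, HasDerivAt K (x * g x) x := fun x =>
    ((continuous_id.mul hg).integral_hasStrictDerivAt 0 x).hasDerivAt
  have hd := (((hK (s + T)).comp_add_const s T).sub (hK s)).sub
    ((hasDerivAt_id s).mul_const (∫ t in (0 : ℝ)..T, g t))
  rw [funext hshift]
  exact hd.congr_deriv (by rw [hp s]; ring)

section Flow

variable {E : Type*} [NormedAddCommGroup E] [InnerProductSpace ℝ E] {T : ℝ}
  {Φ : ℝ → E ≃ₗᵢ[ℝ] E} {G : E → ℝ}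

theorem flow_symm_apply (hΦ0 : Φ 0 = LinearIsometryEquiv.refl ℝ E)
    (hgroup : ∀ s t : ℝ, ∀ ζ : E, Φ (s + t) ζ = Φ s (Φ t ζ)) (t : ℝ) (x : E) :
    (Φ t).symm x = Φ (-t) x := by
  rw [LinearIsometryEquiv.symm_apply_eq, ← hgroup, add_neg_cancel, hΦ0]
  rfl

theorem avgZ_flow_apply (hgroup : ∀ s t : ℝ, ∀ ζ : E, Φ (s + t) ζ = Φ s (Φ t ζ))
    (hper : ∀ t : ℝ, ∀ ζ : E, Φ (t + T) ζ = Φ t ζ) (G : E → ℝ) (s : ℝ) (ζ : E) :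
    avgZ T Φ G (Φ s ζ) = avgZ T Φ G ζ := by
  have hp : Periodic (fun u => G (Φ u ζ)) T := fun u => by simp only [hper]
  unfold avgZ
  congr 1
  calc ∫ t in (0 : ℝ)..T, G (Φ t (Φ s ζ))
      = ∫ t in (0 : ℝ)..T, G (Φ (t + s) ζ) := by simp only [hgroup]
    _ = ∫ u in s..s + T, G (Φ u ζ) := by
      rw [intervalIntegral.integral_comp_add_right (fun u => G (Φ u ζ)), zero_add, add_comm]
    _ = ∫ u in (0 : ℝ)..T, G (Φ u ζ) := by rw [hp.intervalIntegral_add_eq s 0, zero_add]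

theorem hasDerivAt_homChi_flow (hT : T ≠ 0)
    (hgroup : ∀ s t : ℝ, ∀ ζ : E, Φ (s + t) ζ = Φ s (Φ t ζ))
    (hper : ∀ t : ℝ, ∀ ζ : E, Φ (t + T) ζ = Φ t ζ) {ζ : E}
    (hGc : Continuous fun t => G (Φ t ζ)) (s : ℝ) :
    HasDerivAt (fun s => homChi T Φ G (Φ s ζ)) (avgZ T Φ G ζ - G (Φ s ζ)) s := by
  set g := fun t => G (Φ t ζ)
  have hp : Periodic g T := fun u => by simp only [g, hper]
  have hχ : ∀ s, homChi T Φ G (Φ s ζ)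
      = (1 / T) * (T ^ 2 / 2 * avgZ T Φ G ζ - ∫ t in (0 : ℝ)..T, t * g (t + s)) := by
    intro s
    unfold homChi
    simp only [avgZ_flow_apply hgroup hper, ← hgroup, mul_sub]
    rw [intervalIntegral.integral_sub, intervalIntegral.integral_mul_const, integral_id]
    · ring
    · exact (continuous_id.mul continuous_const).intervalIntegrable _ _
    · exact (continuous_id.mul (hGc.comp (continuous_add_const s))).intervalIntegrable _ _
  have hd := ((hasDerivAt_integral_mul_comp_add hGc hp s).const_sub
    (T ^ 2 / 2 * avgZ T Φ G ζ)).const_mul (1 / T)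
  rw [funext hχ]
  refine hd.congr_deriv ?_
  unfold avgZ
  field_simp
  ring

theorem homChi_eq_integral (hT : T ≠ 0)
    (hgroup : ∀ s t : ℝ, ∀ ζ : E, Φ (s + t) ζ = Φ s (Φ t ζ))
    (hper : ∀ t : ℝ, ∀ ζ : E, Φ (t + T) ζ = Φ t ζ) {x : E}
    (hGc : Continuous fun t => G (Φ t x)) :
    homChi T Φ G x = ∫ t in (0 : ℝ)..T, (1 / 2 - t / T) * G (Φ t x) := by
  have hconst : IntervalIntegrable (fun t => t * avgZ T Φ G x) volume 0 T :=
    (continuous_id.mul continuous_const).intervalIntegrable _ _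
  have hweighted : IntervalIntegrable (fun t => t * G (Φ t x)) volume 0 T :=
    (continuous_id.mul hGc).intervalIntegrable _ _
  have hlin : ∀ t,
      (1 / 2 - t / T) * G (Φ t x) = 1 / 2 * G (Φ t x) - T⁻¹ * (t * G (Φ t x)) :=
    fun t => by ring
  unfold homChi
  simp only [avgZ_flow_apply hgroup hper, mul_sub, hlin]
  rw [intervalIntegral.integral_sub hconst hweighted,
    intervalIntegral.integral_sub ((hGc.intervalIntegrable _ _).const_mul _)
      (hweighted.const_mul _),
    intervalIntegral.integral_mul_const, intervalIntegral.integral_const_mul,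
    intervalIntegral.integral_const_mul, integral_id]
  unfold avgZ
  field_simp
  ring

end Flow

section Gradient

variable {E F : Type*} [NormedAddCommGroup E] [InnerProductSpace ℝ E] [CompleteSpace E]
  [NormedAddCommGroup F] [InnerProductSpace ℝ F] [CompleteSpace F]

open InnerProductSpace

theorem HasGradientAt.comp_linearIsometryEquiv {G : F → ℝ} {g : F} (L : E ≃ₗᵢ[ℝ] F) {x : E}
    (h : HasGradientAt G g (L x)) : HasGradientAt (fun y => G (L y)) (L.symm g) x := by
  rw [hasGradientAt_iff_hasFDerivAt] at h ⊢
  refine (h.comp x L.toContinuousLinearEquiv.hasFDerivAt).congr_fderiv ?_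
  ext v
  simp [LinearIsometryEquiv.inner_map_eq_flip]

variable {Φ : ℝ → E ≃ₗᵢ[ℝ] E} {U : Set E} {G : E → ℝ} {C : ℝ} {w : ℝ → ℝ}

theorem hasGradientAt_integral_mul_comp_flow (hΦ0 : Φ 0 = LinearIsometryEquiv.refl ℝ E)
    (hgroup : ∀ s t : ℝ, ∀ ζ : E, Φ (s + t) ζ = Φ s (Φ t ζ))
    (hcont : Continuous fun p : ℝ × E => Φ p.1 p.2) (hU : IsOpen U)
    (hUΦ : ∀ t, ∀ x ∈ U, Φ t x ∈ U) (hG : ContDiffOn ℝ 1 G U)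
    (hGb : ∀ x ∈ U, ‖gradient G x‖ ≤ C) (hw : Continuous w) (a b : ℝ) {ζ : E} (hζ : ζ ∈ U) :
    HasGradientAt (fun x => ∫ t in a..b, w t * G (Φ t x))
      (∫ t in a..b, w t • Φ (-t) (gradient G (Φ t ζ))) ζ := by
  have hGgrad : ∀ y ∈ U, HasGradientAt G (gradient G y) y := fun y hy =>
    ((hG.differentiableOn one_ne_zero).differentiableAt (hU.mem_nhds hy)).hasGradientAt
  have hgradc : ContinuousOn (gradient G) U :=
    (toDual ℝ E).symm.continuous.comp_continuousOn
      (hG.continuousOn_fderiv_of_isOpen hU le_rfl)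
  have horbit : ∀ x ∈ U, Continuous fun t => G (Φ t x) := fun x hx =>
    hG.continuousOn.comp_continuous (hcont.comp (Continuous.prodMk_left x)) fun t => hUΦ t x hx
  have hcomm := (toDual ℝ E).toLinearIsometry.intervalIntegral_comp_comm (a := a) (b := b)
    (μ := volume) fun t => w t • Φ (-t) (gradient G (Φ t ζ))
  rw [LinearIsometryEquiv.coe_toLinearIsometry] at hcomm
  rw [hasGradientAt_iff_hasFDerivAt, ← hcomm]
  refine hasFDerivAt_integral_of_dominated_of_fderiv_le''
    (F' := fun x t => toDual ℝ E (w t • Φ (-t) (gradient G (Φ t x))))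
    (bound := fun t => |w t| * C) (hU.mem_nhds hζ) ?_ ?_ ?_ ?_ ?_ ?_
  · filter_upwards [hU.mem_nhds hζ] with x hx
    exact (hw.mul (horbit x hx)).aestronglyMeasurable
  · exact (hw.mul (horbit ζ hζ)).intervalIntegrable _ _
  · refine ((toDual ℝ E).continuous.comp (hw.smul (hcont.comp (continuous_neg.prodMk ?_))))
      |>.aestronglyMeasurable
    exact hgradc.comp_continuous (hcont.comp (Continuous.prodMk_left ζ)) fun t => hUΦ t ζ hζ
  · refine Filter.Eventually.of_forall fun t x hx => ?_
    rw [LinearIsometryEquiv.norm_map, norm_smul, Real.norm_eq_abs, LinearIsometryEquiv.norm_map]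
    exact mul_le_mul_of_nonneg_left (hGb _ (hUΦ t x hx)) (abs_nonneg _)
  · exact ((continuous_abs.comp hw).mul continuous_const).intervalIntegrable _ _
  · refine Filter.Eventually.of_forall fun t x hx => ?_
    have hcomp := (hGgrad _ (hUΦ t x hx)).comp_linearIsometryEquiv (Φ t)
    rw [flow_symm_apply hΦ0 hgroup] at hcomp
    refine (hcomp.hasFDerivAt.const_mul (w t)).congr_fderiv ?_
    ext v
    simp

theorem norm_gradient_integral_mul_comp_flow_le (hΦ0 : Φ 0 = LinearIsometryEquiv.refl ℝ E)
    (hgroup : ∀ s t : ℝ, ∀ ζ : E, Φ (s + t) ζ = Φ s (Φ t ζ))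
    (hcont : Continuous fun p : ℝ × E => Φ p.1 p.2) (hU : IsOpen U)
    (hUΦ : ∀ t, ∀ x ∈ U, Φ t x ∈ U) (hG : ContDiffOn ℝ 1 G U)
    (hGb : ∀ x ∈ U, ‖gradient G x‖ ≤ C) (hw : Continuous w) {a b M : ℝ}
    (hwM : ∀ t ∈ Set.uIoc a b, |w t| ≤ M) {ζ : E} (hζ : ζ ∈ U) :
    ‖gradient (fun x => ∫ t in a..b, w t * G (Φ t x)) ζ‖ ≤ M * C * |b - a| := by
  rw [(hasGradientAt_integral_mul_comp_flow hΦ0 hgroup hcont hU hUΦ hG hGb hw a b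
    hζ).gradient]
  refine intervalIntegral.norm_integral_le_of_norm_le_const fun t ht => ?_
  rw [norm_smul, Real.norm_eq_abs, LinearIsometryEquiv.norm_map]
  exact mul_le_mul (hwM t ht) (hGb _ (hUΦ t ζ hζ)) (norm_nonneg _)
    ((abs_nonneg _).trans (hwM t ht))

theorem norm_gradient_avgZ_le {T : ℝ} (hT : 0 < T) (hΦ0 : Φ 0 = LinearIsometryEquiv.refl ℝ E)
    (hgroup : ∀ s t : ℝ, ∀ ζ : E, Φ (s + t) ζ = Φ s (Φ t ζ))
    (hcont : Continuous fun p : ℝ × E => Φ p.1 p.2) (hU : IsOpen U)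
    (hUΦ : ∀ t, ∀ x ∈ U, Φ t x ∈ U) (hG : ContDiffOn ℝ 1 G U)
    (hGb : ∀ x ∈ U, ‖gradient G x‖ ≤ C) {ζ : E} (hζ : ζ ∈ U) :
    ‖gradient (avgZ T Φ G) ζ‖ ≤ C := by
  have hZ : avgZ T Φ G = fun x => ∫ t in (0 : ℝ)..T, 1 / T * G (Φ t x) :=
    funext fun x => (intervalIntegral.integral_const_mul _ _).symm
  calc ‖gradient (avgZ T Φ G) ζ‖ ≤ 1 / T * C * |T - 0| := hZ ▸
        norm_gradient_integral_mul_comp_flow_le hΦ0 hgroup hcont hU hUΦ hG hGb continuous_const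
          (fun t _ => (abs_of_pos (by positivity)).le) hζ
    _ = C := by rw [sub_zero, abs_of_pos hT]; field_simp

theorem norm_gradient_homChi_le {T : ℝ} (hT : 0 < T) (hΦ0 : Φ 0 = LinearIsometryEquiv.refl ℝ E)
    (hgroup : ∀ s t : ℝ, ∀ ζ : E, Φ (s + t) ζ = Φ s (Φ t ζ))
    (hper : ∀ t : ℝ, ∀ ζ : E, Φ (t + T) ζ = Φ t ζ)
    (hcont : Continuous fun p : ℝ × E => Φ p.1 p.2) (hU : IsOpen U)
    (hUΦ : ∀ t, ∀ x ∈ U, Φ t x ∈ U) (hG : ContDiffOn ℝ 1 G U)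
    (hGb : ∀ x ∈ U, ‖gradient G x‖ ≤ C) {ζ : E} (hζ : ζ ∈ U) :
    ‖gradient (homChi T Φ G) ζ‖ ≤ T / 2 * C := by
  have hχ : homChi T Φ G =ᶠ[nhds ζ]
      fun x => ∫ t in (0 : ℝ)..T, (1 / 2 - t / T) * G (Φ t x) := by
    filter_upwards [hU.mem_nhds hζ] with x hx
    exact homChi_eq_integral hT.ne' hgroup hper <| hG.continuousOn.comp_continuous
      (hcont.comp (Continuous.prodMk_left x)) fun t => hUΦ t x hx
  have hweight : ∀ t ∈ Set.uIoc 0 T, |1 / 2 - t / T| ≤ 1 / 2 := fun t ht => by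
    rw [Set.uIoc_of_le hT.le] at ht
    have : t / T ≤ 1 := (div_le_one hT).mpr ht.2
    rw [abs_le]
    constructor <;> linarith [div_nonneg ht.1.le hT.le]
  calc ‖gradient (homChi T Φ G) ζ‖ ≤ 1 / 2 * C * |T - 0| := hχ.gradient_eq ▸
        norm_gradient_integral_mul_comp_flow_le hΦ0 hgroup hcont hU hUΦ hG hGb (by fun_prop)
          hweight hζ
    _ = T / 2 * C := by rw [sub_zero, abs_of_pos hT]; ring

end Gradient

theorem stmt_5_general {E : Type*} [NormedAddCommGroup E] [InnerProductSpace ℝ E] [CompleteSpace E]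
    (T R CG : ℝ) (hT : 0 < T)
    (Φ : ℝ → E ≃ₗᵢ[ℝ] E)
    (hΦ0 : Φ 0 = LinearIsometryEquiv.refl ℝ E)
    (hgroup : ∀ s t : ℝ, ∀ ζ : E, Φ (s + t) ζ = Φ s (Φ t ζ))
    (hper : ∀ t : ℝ, ∀ ζ : E, Φ (t + T) ζ = Φ t ζ)
    (hcont : Continuous fun p : ℝ × E => Φ p.1 p.2)
    (J : E ≃ₗᵢ[ℝ] E)
    (G : E → ℝ)
    (hG : AnalyticOnNhd ℝ G (Metric.ball 0 R))
    (hGb : ∀ ζ ∈ Metric.ball (0 : E) R, ‖J (gradient G ζ)‖ ≤ CG) :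
    (∀ ζ ∈ Metric.ball (0 : E) R,
        deriv (fun s : ℝ => homChi T Φ G (Φ s ζ)) 0 + G ζ = avgZ T Φ G ζ) ∧
    (∀ t : ℝ, ∀ ζ : E, avgZ T Φ G (Φ t ζ) = avgZ T Φ G ζ) ∧
    (∀ ζ ∈ Metric.ball (0 : E) R, ‖J (gradient (avgZ T Φ G) ζ)‖ ≤ CG) ∧
    (∀ ζ ∈ Metric.ball (0 : E) R, ‖J (gradient (homChi T Φ G) ζ)‖ ≤ 2 * T * CG) := by
  have hball : ∀ t, ∀ x ∈ Metric.ball (0 : E) R, Φ t x ∈ Metric.ball (0 : E) R := by simp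
  have hG1 : ContDiffOn ℝ 1 G (Metric.ball 0 R) := hG.contDiffOn_of_completeSpace
  have hgradG : ∀ x ∈ Metric.ball (0 : E) R, ‖gradient G x‖ ≤ CG := by
    simpa only [LinearIsometryEquiv.norm_map] using hGb
  have horbit : ∀ x ∈ Metric.ball (0 : E) R, Continuous fun t => G (Φ t x) := fun x hx =>
    hG1.continuousOn.comp_continuous (hcont.comp (Continuous.prodMk_left x)) fun t => hball t x hx
  refine ⟨fun ζ hζ => ?_, avgZ_flow_apply hgroup hper G, fun ζ hζ => ?_, fun ζ hζ => ?_⟩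
  · rw [(hasDerivAt_homChi_flow hT.ne' hgroup hper (horbit ζ hζ) 0).deriv, hΦ0]
    exact sub_add_cancel _ _
  · rw [J.norm_map]
    exact norm_gradient_avgZ_le hT hΦ0 hgroup hcont Metric.isOpen_ball hball hG1 hgradG hζ
  · have hCG : 0 ≤ CG := (norm_nonneg _).trans (hgradG ζ hζ)
    rw [J.norm_map]
    calc _ ≤ T / 2 * CG :=
          norm_gradient_homChi_le hT hΦ0 hgroup hper hcont Metric.isOpen_ball hball hG1 hgradG hζ
      _ ≤ 2 * T * CG := by nlinarith

/-- Homological equation lemma: if `h₀` generates the linear `T`-periodic isometric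
flow `Φ`, and `G` is analytic on `B(R)` with analytic Hamiltonian vector field
`X_G = J ∘ ∇G` bounded by `CG`, then `χ` solves `{χ,h₀} + G = Z`, the average `Z`
is in normal form (`Z ∘ Φ^t = Z`, i.e. `{h₀,Z} = 0`), and
`‖X_Z‖ ≤ CG`, `‖X_χ‖ ≤ 2T·CG` on `B(R)`. -/
theorem stmt_5 {E : Type*} [NormedAddCommGroup E] [InnerProductSpace ℝ E] [CompleteSpace E]
    (T R CG : ℝ) (hT : 0 < T) (hR : 0 < R)
    (Φ : ℝ → E ≃ₗᵢ[ℝ] E)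
    (hΦ0 : Φ 0 = LinearIsometryEquiv.refl ℝ E)
    (hgroup : ∀ s t : ℝ, ∀ ζ : E, Φ (s + t) ζ = Φ s (Φ t ζ))
    (hper : ∀ t : ℝ, ∀ ζ : E, Φ (t + T) ζ = Φ t ζ)
    (hcont : Continuous fun p : ℝ × E => Φ p.1 p.2)
    (J : E ≃ₗᵢ[ℝ] E)
    (hJΦ : ∀ t : ℝ, ∀ v : E, Φ t (J v) = J (Φ t v))
    (G : E → ℝ)
    (hG : AnalyticOnNhd ℝ G (Metric.ball 0 R))
    (hXG : AnalyticOnNhd ℝ (fun ζ => J (gradient G ζ)) (Metric.ball 0 R))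
    (hGb : ∀ ζ ∈ Metric.ball (0 : E) R, ‖J (gradient G ζ)‖ ≤ CG) :
    (∀ ζ ∈ Metric.ball (0 : E) R,
        deriv (fun s : ℝ => homChi T Φ G (Φ s ζ)) 0 + G ζ = avgZ T Φ G ζ) ∧
    (∀ t : ℝ, ∀ ζ : E, avgZ T Φ G (Φ t ζ) = avgZ T Φ G ζ) ∧
    (∀ ζ ∈ Metric.ball (0 : E) R, ‖J (gradient (avgZ T Φ G) ζ)‖ ≤ CG) ∧
    (∀ ζ ∈ Metric.ball (0 : E) R, ‖J (gradient (homChi T Φ G) ζ)‖ ≤ 2 * T * CG) :=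
  stmt_5_general T R CG hT Φ hΦ0 hgroup hper hcont J G hG hGb
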